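/- arXiv:1604.02007 — 2 statements merged into one kernel-verified Lean document; each statement's English description precedes it below -/
import Mathlib

section
/- Let r > 0, M ≥ 0 and λ_1, …, λ_m > 0. Let φ̃ : Δ^m(0,r) → ℝ be a measurable function on the open polydisc Δ^m(0,r) = {ζ ∈ ℂ^m : |ζ_j| < r for all j} satisfying |φ̃(ζ) − Σ_{j=1}^m λ_j |ζ_j|²| ≤ M |ζ|³ for all ζ ∈ Δ^m(0,r). Then for every function h holomorphic on Δ^m(0,r): |h(0)|² · ∫_{Δ^m(0,r)} exp(−2 Σ_{j=1}^m λ_j |ζ_j|²) dV_m(ζ) ≤ exp(2 M m^{3/2} r³) · ∫_{Δ^m(0,r)} |h(ζ)|² e^{−2φ̃(ζ)} dV_m(ζ), the right-hand side being allowed to equal +∞. -/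
/-!
By the mean value property and Jensen's inequality, a function `f` holomorphic near a closed disc
of radius `s` about `0` satisfies `|f 0|² ≤ (2π)⁻¹ ∫ |f (s e^{iθ})|² dθ`. Integrating this in polar
coordinates against a radial weight gives `|f 0|² ∫_{|z|<r} w(|z|) ≤ ∫_{|z|<r} |f|² w(|z|)`, and
Fubini together with induction on the dimension extends it to weights on the polydisc that depend
only on `|ζ_1|, …, |ζ_m|`, such as `exp (-2 Σ λ_j |ζ_j|²)`. Finally `|ζ| ≤ √m r` on the polydisc,
so the hypothesis on `φ̃` gives `exp (-2 Σ λ_j |ζ_j|²) ≤ exp (2 M m^{3/2} r³) exp (-2 φ̃)` there.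
-/

open MeasureTheory

/-- The Euclidean norm on `ℂ^m`. -/
noncomputable def euclNorm {m : ℕ} (z : Fin m → ℂ) : ℝ :=
  Real.sqrt (∑ j, ‖z j‖ ^ 2)

open Metric Set Real Interval
open scoped ENNReal

section

variable {E : Type*} [NormedAddCommGroup E] [NormedSpace ℂ E] [CompleteSpace E]

theorem sq_norm_le_circleAverage_sq_norm {f : ℂ → E} {c : ℂ} {R : ℝ}
    (hf : DiffContOnCl ℂ f (ball c |R|)) :
    ‖f c‖ ^ 2 ≤ circleAverage (fun z ↦ ‖f z‖ ^ 2) c R := by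
  have hcont : ContinuousOn f (sphere c |R|) := hf.continuousOn_ball.mono sphere_subset_closedBall
  have hvol : volume (Ι (0 : ℝ) (2 * π)) = ENNReal.ofReal (2 * π) := by
    rw [uIoc_of_le (by positivity), Real.volume_Ioc, sub_zero]
  rw [← hf.circleAverage, circleAverage_eq_intervalAverage, circleAverage_eq_intervalAverage]
  exact ((convexOn_norm convex_univ).pow (fun _ _ ↦ norm_nonneg _) 2).map_set_average_le
    (by fun_prop) isClosed_univ (by simp [hvol, pi_pos]) (by simp [hvol, ENNReal.mul_eq_top])
    (Filter.Eventually.of_forall fun _ ↦ mem_univ _)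
    (intervalIntegrable_iff.1 hcont.circleIntegrable')
    (intervalIntegrable_iff.1 (hcont.norm.pow 2).circleIntegrable')

theorem setLIntegral_Ioo_circleMap_eq_circleAverage {g : ℂ → ℝ} {c : ℂ} {R : ℝ} (hg : 0 ≤ g)
    (hgc : ContinuousOn g (sphere c |R|)) :
    ∫⁻ θ in Ioo (-π) π, ENNReal.ofReal (g (circleMap c R θ)) =
      ENNReal.ofReal (2 * π * circleAverage g c R) := by
  have hcont : Continuous fun θ ↦ g (circleMap c R θ) :=
    hgc.comp_continuous (continuous_circleMap c R) (circleMap_mem_sphere' c R)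
  rw [circleAverage_eq_integral_add (-π), intervalIntegral.integral_comp_add_right
    (fun θ ↦ g (circleMap c R θ)), smul_eq_mul, ← mul_assoc,
    mul_inv_cancel₀ (by positivity), one_mul, zero_add, show 2 * π + -π = π by ring,
    intervalIntegral.integral_of_le (by linarith [pi_pos]), integral_Ioc_eq_integral_Ioo,
    ofReal_integral_eq_lintegral_ofReal]
  · exact hcont.integrableOn_Icc.mono_set Ioo_subset_Icc_self
  · exact Filter.Eventually.of_forall fun θ ↦ hg _

theorem setLIntegral_Ioo_sq_norm_center_le {f : ℂ → E} {c : ℂ} {R : ℝ}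
    (hf : DiffContOnCl ℂ f (ball c |R|)) :
    ∫⁻ _ in Ioo (-π) π, ENNReal.ofReal (‖f c‖ ^ 2) ≤
      ∫⁻ θ in Ioo (-π) π, ENNReal.ofReal (‖f (circleMap c R θ)‖ ^ 2) := by
  have hcont : ContinuousOn (fun z ↦ ‖f z‖ ^ 2) (sphere c |R|) :=
    (hf.continuousOn_ball.mono sphere_subset_closedBall).norm.pow 2
  rw [setLIntegral_Ioo_circleMap_eq_circleAverage (fun _ ↦ by positivity) hcont,
    setLIntegral_const, Real.volume_Ioo, ← ENNReal.ofReal_mul (by positivity), sub_neg_eq_add,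
    ← two_mul, mul_comm]
  exact ENNReal.ofReal_le_ofReal (mul_le_mul_of_nonneg_left
    (sq_norm_le_circleAverage_sq_norm hf) (by positivity))

theorem lintegral_eq_lintegral_circleMap {F : ℂ → ℝ≥0∞} (hF : Measurable F) :
    ∫⁻ z, F z =
      ∫⁻ s in Ioi 0, ENNReal.ofReal s * ∫⁻ θ in Ioo (-π) π, F (circleMap 0 s θ) := by
  have hcircle : ∀ p : ℝ × ℝ, Complex.polarCoord.symm p = circleMap 0 p.1 p.2 := fun p ↦ by
    simp [circleMap, Complex.exp_mul_I, ← Complex.ofReal_cos, ← Complex.ofReal_sin]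
  rw [← Complex.lintegral_comp_polarCoord_symm, polarCoord_target,
    Measure.volume_eq_prod, ← Measure.prod_restrict, lintegral_prod]
  · refine lintegral_congr fun s ↦ ?_
    simp only [hcircle, smul_eq_mul]
    exact lintegral_const_mul _ (hF.comp (by fun_prop))
  · simp only [hcircle, smul_eq_mul]
    exact (measurable_fst.ennreal_ofReal.mul (hF.comp (by fun_prop))).aemeasurable

theorem setLIntegral_ball_eq_lintegral_circleMap {F : ℂ → ℝ≥0∞} (hF : Measurable F) (r : ℝ) :
    ∫⁻ z in ball 0 r, F z =
      ∫⁻ s in Ioo 0 r, ENNReal.ofReal s * ∫⁻ θ in Ioo (-π) π, F (circleMap 0 s θ) := by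
  rw [← lintegral_indicator measurableSet_ball,
    lintegral_eq_lintegral_circleMap (hF.indicator measurableSet_ball),
    ← Ioi_inter_Iio (a := (0 : ℝ)), inter_comm, ← Measure.restrict_restrict measurableSet_Iio,
    ← lintegral_indicator measurableSet_Iio]
  refine setLIntegral_congr_fun measurableSet_Ioi fun s hs ↦ ?_
  have hmem : ∀ θ, circleMap 0 s θ ∈ ball 0 r ↔ s ∈ Iio r := fun θ ↦ by
    rw [mem_ball, dist_zero_right, norm_circleMap_zero, abs_of_pos hs, mem_Iio]
  by_cases hsr : s ∈ Iio r
  · simp [indicator_of_mem, hmem, hsr]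
  · simp [indicator_of_notMem, hmem, hsr]

theorem sq_norm_mul_setLIntegral_ball_le {f : ℂ → E} {r : ℝ}
    (hf : DifferentiableOn ℂ f (ball (0 : ℂ) r)) {w : ℝ → ℝ≥0∞} (hw : Measurable w) :
    ENNReal.ofReal (‖f 0‖ ^ 2) * ∫⁻ z in ball (0 : ℂ) r, w ‖z‖ ≤
      ∫⁻ z in ball 0 r, ENNReal.ofReal (‖f z‖ ^ 2) * w ‖z‖ := by
  classical
  -- The polar formula needs a measurable integrand on all of `ℂ`, but `‖f‖` is only continuous on
  -- the disc: hence its extension by `0`.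
  set g := (ball (0 : ℂ) r).piecewise (fun z ↦ ‖f z‖) 0
  have hg : Measurable g :=
    hf.continuousOn.norm.measurable_piecewise continuousOn_const measurableSet_ball
  have hw' : Measurable fun z : ℂ ↦ w ‖z‖ := hw.comp measurable_norm
  have hcircle : ∀ s ∈ Ioo 0 r, ∀ θ, ‖circleMap 0 s θ‖ = s ∧ circleMap 0 s θ ∈ ball 0 r :=
    fun s hs θ ↦ by
      rw [mem_ball, dist_zero_right, norm_circleMap_zero, abs_of_pos hs.1]
      exact ⟨rfl, hs.2⟩
  calc ENNReal.ofReal (‖f 0‖ ^ 2) * ∫⁻ z in ball (0 : ℂ) r, w ‖z‖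
      = ∫⁻ s in Ioo 0 r, ENNReal.ofReal s *
          ∫⁻ θ in Ioo (-π) π, ENNReal.ofReal (‖f 0‖ ^ 2) * w ‖circleMap 0 s θ‖ := by
        rw [← lintegral_const_mul _ hw', setLIntegral_ball_eq_lintegral_circleMap
          (hw'.const_mul _)]
    _ ≤ ∫⁻ s in Ioo 0 r, ENNReal.ofReal s *
          ∫⁻ θ in Ioo (-π) π, ENNReal.ofReal (g (circleMap 0 s θ) ^ 2) *
            w ‖circleMap 0 s θ‖ := by
        refine setLIntegral_mono' measurableSet_Ioo fun s hs ↦ ?_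
        simp only [(hcircle s hs _).1]
        rw [lintegral_mul_const _ measurable_const, lintegral_mul_const _ (by fun_prop)]
        gcongr _ * (?_ * _)
        simp only [g, piecewise_eq_of_mem _ _ _ (hcircle s hs _).2]
        refine setLIntegral_Ioo_sq_norm_center_le (hf.diffContOnCl_ball ?_)
        exact closedBall_subset_ball (by rw [abs_of_pos hs.1]; exact hs.2)
    _ = ∫⁻ z in ball 0 r, ENNReal.ofReal (‖f z‖ ^ 2) * w ‖z‖ := by
        rw [← setLIntegral_ball_eq_lintegral_circleMap
          (F := fun z ↦ ENNReal.ofReal (g z ^ 2) * w ‖z‖) (by fun_prop)]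
        exact setLIntegral_congr_fun measurableSet_ball fun z hz ↦ by
          simp only [g, piecewise_eq_of_mem _ _ _ hz]

def polydisc (m : ℕ) (r : ℝ) : Set (Fin m → ℂ) := {ζ | ∀ j, ‖ζ j‖ < r}

theorem polydisc_eq_pi (m : ℕ) (r : ℝ) : polydisc m r = univ.pi fun _ ↦ ball 0 r := by
  ext ζ
  simp [polydisc]

theorem measurableSet_polydisc (m : ℕ) (r : ℝ) : MeasurableSet (polydisc m r) := by
  rw [polydisc_eq_pi]
  exact .univ_pi fun _ ↦ measurableSet_ball

theorem cons_mem_polydisc_succ {m : ℕ} {r : ℝ} {z : ℂ} {ζ : Fin m → ℂ} :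
    (Fin.cons z ζ : Fin (m + 1) → ℂ) ∈ polydisc (m + 1) r ↔ z ∈ ball 0 r ∧ ζ ∈ polydisc m r := by
  simp [polydisc, Fin.forall_fin_succ]

theorem setLIntegral_polydisc_succ {m : ℕ} {r : ℝ} {G : (Fin (m + 1) → ℂ) → ℝ≥0∞}
    (hG : AEMeasurable G (volume.restrict (polydisc (m + 1) r))) :
    ∫⁻ ζ in polydisc (m + 1) r, G ζ = ∫⁻ ζ in polydisc m r, ∫⁻ z in ball 0 r, G (Fin.cons z ζ) := by
  set e := (MeasurableEquiv.piFinSuccAbove (fun _ : Fin (m + 1) ↦ ℂ) 0).symm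
  have he : ∀ p, e p = Fin.cons p.1 p.2 := fun p ↦ Fin.insertNth_zero' p.1 p.2
  have hpre : e ⁻¹' polydisc (m + 1) r = ball 0 r ×ˢ polydisc m r := by
    ext p
    simp only [mem_preimage, he, cons_mem_polydisc_succ, mem_prod]
  have hmp : MeasurePreserving e := (volume_preserving_piFinSuccAbove _ 0).symm
  rw [← hmp.setLIntegral_comp_preimage_emb e.measurableEmbedding, hpre, Measure.volume_eq_prod,
    ← Measure.prod_restrict, lintegral_prod_symm]
  · simp only [he]
  · have := (hmp.restrict_preimage (measurableSet_polydisc (m + 1) r)).quasiMeasurePreserving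
    rw [hpre, Measure.volume_eq_prod, ← Measure.prod_restrict] at this
    exact hG.comp_quasiMeasurePreserving this

theorem sq_norm_mul_setLIntegral_polydisc_le {m : ℕ} {r : ℝ} (hr : 0 < r) {f : (Fin m → ℂ) → E}
    (hf : DifferentiableOn ℂ f (polydisc m r)) {W : (Fin m → ℝ) → ℝ≥0∞} (hW : Measurable W) :
    ENNReal.ofReal (‖f 0‖ ^ 2) * ∫⁻ ζ in polydisc m r, W (‖ζ ·‖) ≤
      ∫⁻ ζ in polydisc m r, ENNReal.ofReal (‖f ζ‖ ^ 2) * W (‖ζ ·‖) := by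
  induction m with
  | zero =>
    rw [← lintegral_const_mul' _ _ ENNReal.ofReal_ne_top]
    exact le_of_eq (lintegral_congr fun ζ ↦ by rw [Subsingleton.elim ζ 0])
  | succ m ih =>
    have hnorm : ∀ (z : ℂ) (ζ : Fin m → ℂ),
        (‖(Fin.cons z ζ : Fin (m + 1) → ℂ) ·‖) = Fin.cons ‖z‖ (‖ζ ·‖) := fun z ζ ↦
      funext fun j ↦ Fin.cases rfl (fun _ ↦ rfl) j
    have hWn : Measurable fun ζ : Fin (m + 1) → ℂ ↦ W (‖ζ ·‖) := hW.comp (by fun_prop)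
    have hV : Measurable fun t ↦ ∫⁻ z in ball (0 : ℂ) r, W (Fin.cons ‖z‖ t) :=
      (hW.comp (by fun_prop : Measurable fun p : ℂ × (Fin m → ℝ) ↦
        (Fin.cons ‖p.1‖ p.2 : Fin (m + 1) → ℝ))).lintegral_prod_left'
    have hslice : ∀ ζ ∈ polydisc m r,
        DifferentiableOn ℂ (fun z ↦ f (Fin.cons z ζ)) (ball 0 r) := fun ζ hζ ↦
      hf.comp (by fun_prop) fun z hz ↦ cons_mem_polydisc_succ.2 ⟨hz, hζ⟩
    have hf₀ : DifferentiableOn ℂ (fun ζ ↦ f (Fin.cons 0 ζ)) (polydisc m r) :=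
      hf.comp (by fun_prop) fun ζ hζ ↦ cons_mem_polydisc_succ.2 ⟨mem_ball_self hr, hζ⟩
    calc ENNReal.ofReal (‖f 0‖ ^ 2) * ∫⁻ ζ in polydisc (m + 1) r, W (‖ζ ·‖)
        = ENNReal.ofReal (‖f (Fin.cons 0 0)‖ ^ 2) *
            ∫⁻ ζ in polydisc m r, ∫⁻ z in ball 0 r, W (Fin.cons ‖z‖ (‖ζ ·‖)) := by
          rw [setLIntegral_polydisc_succ hWn.aemeasurable]
          simp only [hnorm, show f (Fin.cons 0 0) = f 0 from congrArg f Matrix.cons_zero_zero]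
      _ ≤ ∫⁻ ζ in polydisc m r, ENNReal.ofReal (‖f (Fin.cons 0 ζ)‖ ^ 2) *
            ∫⁻ z in ball 0 r, W (Fin.cons ‖z‖ (‖ζ ·‖)) := ih hf₀ hV
      _ ≤ ∫⁻ ζ in polydisc m r, ∫⁻ z in ball 0 r,
            ENNReal.ofReal (‖f (Fin.cons z ζ)‖ ^ 2) * W (Fin.cons ‖z‖ (‖ζ ·‖)) :=
          setLIntegral_mono' (measurableSet_polydisc m r) fun ζ hζ ↦
            sq_norm_mul_setLIntegral_ball_le (hslice ζ hζ)
              (w := fun t ↦ W (Fin.cons t (‖ζ ·‖))) (hW.comp (by fun_prop))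
      _ = ∫⁻ ζ in polydisc (m + 1) r, ENNReal.ofReal (‖f ζ‖ ^ 2) * W (‖ζ ·‖) := by
          rw [setLIntegral_polydisc_succ]
          · simp only [hnorm]
          · exact (((hf.continuousOn.norm.pow 2).aemeasurable
              (measurableSet_polydisc _ r)).ennreal_ofReal).mul hWn.aemeasurable

end

theorem euclNorm_le_sqrt_mul {m : ℕ} {r : ℝ} (hr : 0 ≤ r) {ζ : Fin m → ℂ}
    (hζ : ∀ j, ‖ζ j‖ ≤ r) : euclNorm ζ ≤ √m * r := by
  rw [euclNorm, ← Real.sqrt_sq hr, ← Real.sqrt_mul (Nat.cast_nonneg m)]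
  refine Real.sqrt_le_sqrt ?_
  calc ∑ j, ‖ζ j‖ ^ 2 ≤ ∑ _j : Fin m, r ^ 2 :=
        Finset.sum_le_sum fun j _ ↦ pow_le_pow_left₀ (norm_nonneg _) (hζ j) 2
    _ = m * r ^ 2 := by simp

theorem euclNorm_pow_three_le {m : ℕ} {r : ℝ} (hr : 0 ≤ r) {ζ : Fin m → ℂ}
    (hζ : ∀ j, ‖ζ j‖ ≤ r) : euclNorm ζ ^ 3 ≤ (m : ℝ) ^ (3 / 2 : ℝ) * r ^ 3 := by
  have hm : (m : ℝ) ^ (3 / 2 : ℝ) = √m ^ 3 := by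
    rw [Real.sqrt_eq_rpow, ← Real.rpow_natCast, ← Real.rpow_mul (Nat.cast_nonneg m)]
    norm_num
  rw [hm, ← mul_pow]
  exact pow_le_pow_left₀ (Real.sqrt_nonneg _) (euclNorm_le_sqrt_mul hr hζ) 3

theorem exp_neg_two_mul_le_of_abs_sub_le {a b ε : ℝ} (h : |b - a| ≤ ε) :
    rexp (-2 * a) ≤ rexp (2 * ε) * rexp (-2 * b) := by
  rw [← Real.exp_add, Real.exp_le_exp]
  linarith [(abs_le.1 h).2]

theorem submeanvalue_polydisc_perturbed_general
    (m : ℕ) (r M : ℝ) (hr : 0 < r) (hM : 0 ≤ M)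
    (lam : Fin m → ℝ)
    (φt : (Fin m → ℂ) → ℝ)
    (hφtapprox : ∀ ζ : Fin m → ℂ, (∀ j, ‖ζ j‖ < r) →
      |φt ζ - ∑ j, lam j * ‖ζ j‖ ^ 2| ≤ M * euclNorm ζ ^ 3)
    (h : (Fin m → ℂ) → ℂ)
    (hh : DifferentiableOn ℂ h {ζ : Fin m → ℂ | ∀ j, ‖ζ j‖ < r}) :
    ENNReal.ofReal (‖h 0‖ ^ 2) *
        (∫⁻ ζ in {ζ : Fin m → ℂ | ∀ j, ‖ζ j‖ < r},
          ENNReal.ofReal (Real.exp (-2 * ∑ j, lam j * ‖ζ j‖ ^ 2))) ≤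
      ENNReal.ofReal (Real.exp (2 * M * (m : ℝ) ^ (3 / 2 : ℝ) * r ^ 3)) *
        ∫⁻ ζ in {ζ : Fin m → ℂ | ∀ j, ‖ζ j‖ < r},
          ENNReal.ofReal (‖h ζ‖ ^ 2 * Real.exp (-2 * φt ζ)) := by
  refine (sq_norm_mul_setLIntegral_polydisc_le hr hh
    (W := fun t ↦ ENNReal.ofReal (rexp (-2 * ∑ j, lam j * t j ^ 2))) (by fun_prop)).trans ?_
  rw [← lintegral_const_mul' _ _ ENNReal.ofReal_ne_top]
  refine setLIntegral_mono' (measurableSet_polydisc m r) fun ζ hζ ↦ ?_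
  have hweight := exp_neg_two_mul_le_of_abs_sub_le ((hφtapprox ζ hζ).trans
    (mul_le_mul_of_nonneg_left (euclNorm_pow_three_le hr.le fun j ↦ (hζ j).le) hM))
  rw [← ENNReal.ofReal_mul (by positivity), ← ENNReal.ofReal_mul (by positivity)]
  refine ENNReal.ofReal_le_ofReal ?_
  calc ‖h ζ‖ ^ 2 * rexp (-2 * ∑ j, lam j * ‖ζ j‖ ^ 2)
      ≤ ‖h ζ‖ ^ 2 * (rexp (2 * (M * ((m : ℝ) ^ (3 / 2 : ℝ) * r ^ 3))) * rexp (-2 * φt ζ)) := by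
        gcongr
    _ = rexp (2 * M * (m : ℝ) ^ (3 / 2 : ℝ) * r ^ 3) * (‖h ζ‖ ^ 2 * rexp (-2 * φt ζ)) := by
        rw [show 2 * (M * ((m : ℝ) ^ (3 / 2 : ℝ) * r ^ 3)) = 2 * M * (m : ℝ) ^ (3 / 2 : ℝ) * r ^ 3
          by ring, mul_left_comm]

/-- **Sub-mean value inequality with a perturbed Gaussian weight on a polydisc.**
Let `r > 0`, `M ≥ 0`, `λ_1, …, λ_m > 0`, and let `φ̃` be measurable on the polydisc
`Δ^m(0,r)` with `|φ̃(ζ) − Σ λ_j |ζ_j|²| ≤ M |ζ|³` there. Then for every `h` holomorphic on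
`Δ^m(0,r)`:
`|h(0)|² ∫_{Δ^m(0,r)} e^{-2Σλ_j|ζ_j|²} ≤ exp(2 M m^{3/2} r³) ∫_{Δ^m(0,r)} |h|² e^{-2φ̃}`,
the right-hand side being allowed to equal `+∞`. -/
theorem submeanvalue_polydisc_perturbed
    (m : ℕ) (r M : ℝ) (hr : 0 < r) (hM : 0 ≤ M)
    (lam : Fin m → ℝ) (hlam : ∀ j, 0 < lam j)
    (φt : (Fin m → ℂ) → ℝ)
    (hφtmeas : AEMeasurable φt
      (volume.restrict {ζ : Fin m → ℂ | ∀ j, ‖ζ j‖ < r}))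
    (hφtapprox : ∀ ζ : Fin m → ℂ, (∀ j, ‖ζ j‖ < r) →
      |φt ζ - ∑ j, lam j * ‖ζ j‖ ^ 2| ≤ M * euclNorm ζ ^ 3)
    (h : (Fin m → ℂ) → ℂ)
    (hh : DifferentiableOn ℂ h {ζ : Fin m → ℂ | ∀ j, ‖ζ j‖ < r}) :
    ENNReal.ofReal (‖h 0‖ ^ 2) *
        (∫⁻ ζ in {ζ : Fin m → ℂ | ∀ j, ‖ζ j‖ < r},
          ENNReal.ofReal (Real.exp (-2 * ∑ j, lam j * ‖ζ j‖ ^ 2))) ≤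
      ENNReal.ofReal (Real.exp (2 * M * (m : ℝ) ^ (3 / 2 : ℝ) * r ^ 3)) *
        ∫⁻ ζ in {ζ : Fin m → ℂ | ∀ j, ‖ζ j‖ < r},
          ENNReal.ofReal (‖h ζ‖ ^ 2 * Real.exp (-2 * φt ζ)) :=
  submeanvalue_polydisc_perturbed_general m r M hr hM lam φt hφtapprox h hh
end

section
/- Let R > 0 and let Ω = {(u,v) ∈ ℂ^m × ℂ^m : |u| < R, |v| < R}. If F : Ω → ℂ is holomorphic and F(u, ū) = 0 for every u with |u| < R, where ū denotes coordinatewise complex conjugation, then F is identically zero on Ω. (The set {(u, ū) : |u| < R} is maximally totally real in ℂ^{2m}.) -/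
/-!
In the coordinates `u = x + i y`, `v = x - i y` the set `{(u, ū)}` becomes the real points
`x, y ∈ ℝ^m`. A holomorphic function on a polydisc vanishing at its real points vanishes
identically: freeing one coordinate at a time, each step is the one-variable identity theorem
for a function vanishing on a real interval. Hence `F` vanishes near the origin, and the
identity theorem on the complex lines through the origin of the convex domain `Ω` spreads this
to all of `Ω`.
-/

open Complex Metric Filter Topology Set

section OneVariable

variable {E : Type*} [NormedAddCommGroup E] [NormedSpace ℂ E] [CompleteSpace E]

theorem DifferentiableOn.eqOn_zero_of_ofReal_eq_zero {r : ℝ} {f : ℂ → E}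
    (hf : DifferentiableOn ℂ f (ball 0 r)) (hreal : ∀ t : ℝ, |t| < r → f t = 0) :
    EqOn f 0 (ball 0 r) := by
  intro z hz
  have hr : 0 < r := pos_of_mem_ball hz
  have hofReal : Tendsto ((↑) : ℝ → ℂ) (𝓝[≠] 0) (𝓝[≠] 0) := by
    have := continuous_ofReal.continuousWithinAt.tendsto_nhdsWithin (x := 0) (t := {0}ᶜ)
      fun t (ht : t ∈ ({0}ᶜ : Set ℝ)) => ofReal_ne_zero.mpr ht
    rwa [ofReal_zero] at this
  have hfreq : ∃ᶠ w in 𝓝[≠] (0 : ℂ), f w = 0 := by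
    refine hofReal.frequently (Eventually.frequently ?_)
    filter_upwards [nhdsWithin_le_nhds (Ioo_mem_nhds (neg_neg_iff_pos.mpr hr) hr)] with t ht
    exact hreal t (abs_lt.mpr ht)
  exact (hf.analyticOnNhd isOpen_ball).eqOn_zero_of_preconnected_of_frequently_eq_zero
    (convex_ball 0 r).isPreconnected (mem_ball_self hr) hfreq hz

end OneVariable

section Polydisc

variable {ι E : Type*} [Fintype ι]
  [NormedAddCommGroup E] [NormedSpace ℂ E] [CompleteSpace E]

theorem update_mem_ball_zero [DecidableEq ι] {r : ℝ} {w : ι → ℂ} (hw : w ∈ ball 0 r) (k : ι)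
    {z : ℂ} (hz : z ∈ ball 0 r) : Function.update w k z ∈ ball 0 r := by
  have hr : 0 < r := pos_of_mem_ball hz
  rw [mem_ball_zero_iff, pi_norm_lt_iff hr] at hw ⊢
  intro j
  rcases eq_or_ne j k with rfl | hj
  · simpa using hz
  · simpa [hj] using hw j

theorem DifferentiableOn.eqOn_zero_of_real_eq_zero {r : ℝ} {g : (ι → ℂ) → E}
    (hg : DifferentiableOn ℂ g (ball 0 r))
    (hreal : ∀ w ∈ ball (0 : ι → ℂ) r, (∀ j, (w j).im = 0) → g w = 0) :
    EqOn g 0 (ball 0 r) := by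
  classical
  suffices ∀ s : Finset ι, ∀ w ∈ ball (0 : ι → ℂ) r, (∀ j ∉ s, (w j).im = 0) → g w = 0 from
    fun w hw => this Finset.univ w hw (by simp)
  intro s
  induction s using Finset.induction_on with
  | empty => simpa using hreal
  | insert k s _ ih =>
    intro w hw hw_im
    have hline : EqOn (fun z => g (Function.update w k z)) 0 (ball 0 r) := by
      refine DifferentiableOn.eqOn_zero_of_ofReal_eq_zero
        (hg.comp (fun z _ => (hasFDerivAt_update w z).differentiableAt.differentiableWithinAt)
          fun z hz => update_mem_ball_zero hw k hz) fun t ht => ?_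
      refine ih _ (update_mem_ball_zero hw k (z := t) (by simpa using ht)) fun j hj => ?_
      rcases eq_or_ne j k with rfl | hjk
      · simp
      · simpa [hjk] using hw_im j (by simp [hjk, hj])
    have hwk : w k ∈ ball (0 : ℂ) r :=
      mem_ball_zero_iff.mpr ((norm_le_pi_norm w k).trans_lt (mem_ball_zero_iff.mp hw))
    simpa using hline hwk

end Polydisc

section Convex

variable {V E : Type*} [NormedAddCommGroup V] [NormedSpace ℂ V]
  [NormedAddCommGroup E] [NormedSpace ℂ E] [CompleteSpace E]

theorem DifferentiableOn.eqOn_zero_of_convex_of_eventuallyEq_zero {Ω : Set V} {F : V → E}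
    (hF : DifferentiableOn ℂ F Ω) (hΩ_open : IsOpen Ω) (hΩ_conv : Convex ℝ Ω) {x₀ : V}
    (hx₀ : x₀ ∈ Ω) (hF₀ : F =ᶠ[𝓝 x₀] 0) : EqOn F 0 Ω := by
  intro p hp
  let L : ℂ → V := fun z => x₀ + z • (p - x₀)
  have hL : Differentiable ℂ L := by fun_prop
  have hU_open : IsOpen (L ⁻¹' Ω) := hΩ_open.preimage hL.continuous
  have hU_conv : Convex ℝ (L ⁻¹' Ω) :=
    (hΩ_conv.translate_preimage_right x₀).linear_preimage
      ((LinearMap.toSpanSingleton ℂ V (p - x₀)).restrictScalars ℝ)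
  have hL0 : L 0 = x₀ := by simp [L]
  have hL1 : L 1 = p := by simp [L]
  have hFL : AnalyticOnNhd ℂ (F ∘ L) (L ⁻¹' Ω) :=
    (hF.comp hL.differentiableOn (mapsTo_preimage L Ω)).analyticOnNhd hU_open
  have hFL₀ : F ∘ L =ᶠ[𝓝 0] 0 := hF₀.comp_tendsto (hL0 ▸ hL.continuous.tendsto 0)
  simpa [hL1] using hFL.eqOn_zero_of_preconnected_of_eventuallyEq_zero hU_conv.isPreconnected
    (show L 0 ∈ Ω from hL0 ▸ hx₀) hFL₀ (show L 1 ∈ Ω from hL1 ▸ hp)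

end Convex

section TotallyReal

variable {ι : Type*}

noncomputable def conjCoords (w : ι ⊕ ι → ℂ) : (ι → ℂ) × (ι → ℂ) :=
  (fun j => w (.inl j) + I * w (.inr j), fun j => w (.inl j) - I * w (.inr j))

noncomputable def conjCoordsInv (p : (ι → ℂ) × (ι → ℂ)) : ι ⊕ ι → ℂ :=
  Sum.elim (fun j => (p.1 j + p.2 j) / 2) (fun j => (p.1 j - p.2 j) / (2 * I))

theorem conjCoords_conjCoordsInv (p : (ι → ℂ) × (ι → ℂ)) : conjCoords (conjCoordsInv p) = p := by
  ext j <;> simp [conjCoords, conjCoordsInv] <;> field_simp <;> ring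

theorem conjCoords_of_im_eq_zero {w : ι ⊕ ι → ℂ} (hw : ∀ j, (w j).im = 0) :
    conjCoords w = ((conjCoords w).1, fun j => starRingEnd ℂ ((conjCoords w).1 j)) := by
  ext j
  · rfl
  · simp [conjCoords, conj_eq_iff_im.mpr (hw _), sub_eq_add_neg]

theorem continuous_conjCoordsInv : Continuous (conjCoordsInv (ι := ι)) := by
  refine continuous_pi fun i => ?_
  rcases i with j | j <;> simp only [conjCoordsInv, Sum.elim_inl, Sum.elim_inr] <;> fun_prop

variable [Fintype ι]

theorem differentiable_conjCoords : Differentiable ℂ (conjCoords (ι := ι)) := by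
  unfold conjCoords; fun_prop

variable {E : Type*} [NormedAddCommGroup E] [NormedSpace ℂ E] [CompleteSpace E]

theorem DifferentiableOn.eventuallyEq_zero_of_conj_eq_zero {Ω : Set ((ι → ℂ) × (ι → ℂ))}
    {F : (ι → ℂ) × (ι → ℂ) → E} (hF : DifferentiableOn ℂ F Ω) (hΩ : Ω ∈ 𝓝 0)
    (hconj : ∀ u : ι → ℂ, (u, fun j => starRingEnd ℂ (u j)) ∈ Ω →
      F (u, fun j => starRingEnd ℂ (u j)) = 0) :
    F =ᶠ[𝓝 0] 0 := by
  have hT : Tendsto conjCoords (𝓝 0) (𝓝 (0 : (ι → ℂ) × (ι → ℂ))) :=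
    differentiable_conjCoords.continuous.tendsto' 0 0 (by ext <;> simp [conjCoords])
  obtain ⟨r, hr, hball⟩ := Metric.mem_nhds_iff.mp (hT hΩ)
  have hFT : EqOn (F ∘ conjCoords) 0 (ball 0 r) := by
    refine (hF.comp differentiable_conjCoords.differentiableOn hball).eqOn_zero_of_real_eq_zero
      fun w hw hw_im => ?_
    have hw' := hball hw
    rw [mem_preimage, conjCoords_of_im_eq_zero hw_im] at hw'
    rw [Function.comp_apply, conjCoords_of_im_eq_zero hw_im]
    exact hconj _ hw'
  have hS : Tendsto conjCoordsInv (𝓝 0) (𝓝 (0 : ι ⊕ ι → ℂ)) :=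
    continuous_conjCoordsInv.tendsto' 0 0 (by ext (j | j) <;> simp [conjCoordsInv])
  filter_upwards [hS (ball_mem_nhds 0 hr)] with p hp
  simpa [conjCoords_conjCoordsInv] using hFT hp

end TotallyReal

theorem continuous_euclNorm {m : ℕ} : Continuous (euclNorm (m := m)) := by
  unfold euclNorm; fun_prop

theorem convexOn_euclNorm {m : ℕ} : ConvexOn ℝ univ (euclNorm (m := m)) := by
  have : euclNorm (m := m) = fun z => ‖WithLp.toLp 2 z‖ :=
    funext fun z => (EuclideanSpace.norm_eq _).symm
  rw [this]
  exact convexOn_univ_norm.comp_linearMap (WithLp.linearEquiv 2 ℝ (Fin m → ℂ)).symm.toLinearMap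

/-- **Uniqueness along a maximally totally real set.**
If `F` is holomorphic on `Ω = {(u,v) : |u| < R, |v| < R} ⊆ ℂ^m × ℂ^m` and vanishes on
`{(u, ū) : |u| < R}` (a maximally totally real subset), then `F ≡ 0` on `Ω`. -/
theorem holomorphic_vanishing_on_totally_real
    (m : ℕ) (R : ℝ) (hR : 0 < R)
    (F : (Fin m → ℂ) × (Fin m → ℂ) → ℂ)
    (hF : DifferentiableOn ℂ F
      {p : (Fin m → ℂ) × (Fin m → ℂ) | euclNorm p.1 < R ∧ euclNorm p.2 < R})
    (hvanish : ∀ u : Fin m → ℂ, euclNorm u < R →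
      F (u, fun j => (starRingEnd ℂ) (u j)) = 0) :
    ∀ p : (Fin m → ℂ) × (Fin m → ℂ), euclNorm p.1 < R → euclNorm p.2 < R → F p = 0 := by
  set B : Set (Fin m → ℂ) := {u | euclNorm u < R}
  have hB_open : IsOpen B := isOpen_lt continuous_euclNorm continuous_const
  have hB_conv : Convex ℝ B := by simpa using convexOn_euclNorm.convex_lt R
  have h0 : (0 : Fin m → ℂ) ∈ B := by simpa [B, euclNorm] using hR
  have hF₀ : F =ᶠ[𝓝 0] 0 :=
    hF.eventuallyEq_zero_of_conj_eq_zero ((hB_open.prod hB_open).mem_nhds ⟨h0, h0⟩)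
      fun u hu => hvanish u hu.1
  exact fun p hp₁ hp₂ => hF.eqOn_zero_of_convex_of_eventuallyEq_zero (hB_open.prod hB_open)
    (hB_conv.prod hB_conv) (x₀ := 0) ⟨h0, h0⟩ hF₀ ⟨hp₁, hp₂⟩
end
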